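/- arXiv:1509.07567 — 2 statements merged into one kernel-verified Lean document; each statement's English description precedes it below -/
import Mathlib

section
/- For every real α ∈ (0,1), a finite digraph G is a proportionality α-digraph if and only if G has no one-way cycle. -/
/-!
If `E u v` holds but `E v u` does not, the proportionality condition gives
`α |A u| < |A u ∩ A v| ≤ α |A v|`, so set sizes strictly increase along one-way edges and no
one-way cycle can close up.

Conversely, without one-way cycles the one-way edges admit a ranking `f : V → ℕ`. Take
`|A v| = M + K f v` with `α K > 1`: along a one-way edge `u → v` the thresholds `α |A u|` and
`α |A v|` are then more than `1` apart, so every pair `{u, v}` can be assigned an intersection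
size lying above exactly the thresholds of those endpoints that point to the other one. These
sizes are at least `⌊α M⌋` and exceed it by a bounded amount, so they are realised by a common
core of size `⌊α M⌋`, one block per pair for the excess, and padding, which fits once `M` is
large.
-/

def HasOneWayCycle {V : Type*} (E : V → V → Prop) : Prop :=
  ∃ (n : ℕ) (v : ℕ → V), 1 ≤ n ∧ v n = v 0 ∧
    ∀ i < n, E (v i) (v (i + 1)) ∧ ¬ E (v (i + 1)) (v i)

open Finset

lemma not_hasOneWayCycle_of_lt {V β : Type*} [Preorder β] {E : V → V → Prop} (g : V → β)
    (hg : ∀ u v, E u v → ¬E v u → g u < g v) : ¬HasOneWayCycle E := by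
  rintro ⟨n, w, hn, hwn, hw⟩
  have step (i : ℕ) (hi : i < n) : g (w i) < g (w (i + 1)) := hg _ _ (hw i hi).1 (hw i hi).2
  have mono (i : ℕ) (hi : i ≤ n) : g (w 0) ≤ g (w i) := by
    induction i with
    | zero => exact le_rfl
    | succ i ih => exact (ih (by omega)).trans (step i (by omega)).le
  obtain ⟨m, rfl⟩ : ∃ m, n = m + 1 := ⟨n - 1, by omega⟩
  exact lt_irrefl _ (hwn ▸ (mono m (by omega)).trans_lt (step m (by omega)))

lemma Relation.TransGen.exists_seq {α : Type*} {R : α → α → Prop} {a b : α}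
    (h : Relation.TransGen R a b) :
    ∃ n, 1 ≤ n ∧ ∃ w : ℕ → α, w 0 = a ∧ w n = b ∧ ∀ i < n, R (w i) (w (i + 1)) := by
  induction h with
  | @single b hab => exact ⟨1, le_rfl, fun i => if i = 0 then a else b, rfl, rfl, by simpa⟩
  | @tail b c _ hbc ih =>
    obtain ⟨n, hn, w, hw0, hwn, hw⟩ := ih
    refine ⟨n + 1, by omega, Function.update w (n + 1) c, by simp [hw0], by simp, fun i hi => ?_⟩
    rcases Nat.lt_succ_iff_lt_or_eq.1 hi with hi | rfl
    · simpa [Function.update_of_ne (by omega : i ≠ n + 1),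
        Function.update_of_ne (by omega : i + 1 ≠ n + 1)] using hw i hi
    · simpa [Function.update_of_ne (by omega : i ≠ i + 1), hwn] using hbc

lemma not_transGen_self_of_not_hasOneWayCycle {V : Type*} {E : V → V → Prop}
    (h : ¬HasOneWayCycle E) (v : V) : ¬Relation.TransGen (fun a b => E a b ∧ ¬E b a) v v := by
  intro hv
  obtain ⟨n, hn, w, hw0, hwn, hw⟩ := hv.exists_seq
  exact h ⟨n, w, hn, hwn.trans hw0.symm, hw⟩

lemma exists_rank_of_not_transGen_self {V : Type*} [Fintype V] {R : V → V → Prop}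
    (h : ∀ v, ¬Relation.TransGen R v v) :
    ∃ f : V → ℕ, ∀ u v, R u v → f u < f v := by
  classical
  refine ⟨fun v => #{u | Relation.TransGen R u v}, fun u v huv => card_lt_card ?_⟩
  refine (ssubset_iff_of_subset fun w hw => ?_).2 ⟨u, ?_, ?_⟩
  · simp only [mem_filter, mem_univ, true_and] at hw ⊢
    exact hw.tail huv
  · simpa using Relation.TransGen.single huv
  · simpa using h u

lemma exists_nat_lt_iff_of_gap {P Q : Prop} {a b : ℝ} {c : ℕ} (ha : c ≤ a) (hb : c ≤ b)
    (hPQ : P → ¬Q → a + 1 < b) (hQP : Q → ¬P → b + 1 < a) :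
    ∃ t : ℕ, c ≤ t ∧ (t : ℝ) ≤ max a b + 1 ∧ (P ↔ a < t) ∧ (Q ↔ b < t) := by
  have floor_succ {x : ℝ} (hx : c ≤ x) :
      c ≤ ⌊x⌋₊ + 1 ∧ x < (⌊x⌋₊ + 1 : ℕ) ∧ ((⌊x⌋₊ + 1 : ℕ) : ℝ) ≤ x + 1 := by
    have hx0 : 0 ≤ x := (Nat.cast_nonneg c).trans hx
    exact ⟨(Nat.le_floor hx).trans (Nat.le_succ _), by simpa using Nat.lt_floor_add_one x,
      by push_cast; linarith [Nat.floor_le hx0]⟩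
  have := le_max_left a b
  have := le_max_right a b
  by_cases hP : P <;> by_cases hQ : Q
  · obtain ⟨h₁, h₂, h₃⟩ := floor_succ (ha.trans (le_max_left a b))
    exact ⟨_, h₁, h₃, iff_of_true hP (by linarith), iff_of_true hQ (by linarith)⟩
  · obtain ⟨h₁, h₂, h₃⟩ := floor_succ ha
    exact ⟨_, h₁, by linarith, iff_of_true hP h₂,
      iff_of_false hQ (not_lt.2 (by linarith [hPQ hP hQ]))⟩
  · obtain ⟨h₁, h₂, h₃⟩ := floor_succ hb
    exact ⟨_, h₁, by linarith, iff_of_false hP (not_lt.2 (by linarith [hQP hQ hP])),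
      iff_of_true hQ h₂⟩
  · exact ⟨c, le_rfl, by linarith, iff_of_false hP (not_lt.2 ha), iff_of_false hQ (not_lt.2 hb)⟩

lemma exists_sym2_lt_iff_of_gap {V : Type*} (E : V → V → Prop) (θ : V → ℝ) (c : ℕ) (Θ : ℝ)
    (hc : ∀ v, c ≤ θ v) (hΘ : ∀ v, θ v ≤ Θ) (hgap : ∀ u v, E u v → ¬E v u → θ u + 1 < θ v) :
    ∃ p : Sym2 V → ℕ, (∀ z, c + p z ≤ Θ + 1) ∧ ∀ u v, E u v ↔ θ u < c + p s(u, v) := by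
  have h (z : Sym2 V) :
      ∃ p : ℕ, c + p ≤ Θ + 1 ∧ ∀ u v, s(u, v) = z → (E u v ↔ θ u < c + p) := by
    induction z using Sym2.ind with | _ a b => ?_
    obtain ⟨t, hct, htΘ, hab, hba⟩ :=
      exists_nat_lt_iff_of_gap (hc a) (hc b) (hgap a b) (hgap b a)
    obtain ⟨p, rfl⟩ := Nat.exists_eq_add_of_le hct
    push_cast at htΘ hab hba
    refine ⟨p, by linarith [max_le (hΘ a) (hΘ b)], fun u v huv => ?_⟩
    rcases Sym2.eq_iff.1 huv with ⟨rfl, rfl⟩ | ⟨rfl, rfl⟩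
    exacts [hab, hba]
  choose p hpΘ hp using h
  exact ⟨p, hpΘ, fun u v => hp _ u v rfl⟩

namespace IntersectionPattern

variable {V : Type*} [Fintype V] [DecidableEq V]

/-- A core shared by all sets, a block for each pair `z` shared by the two ends of `z`, and a
padding block private to each vertex. -/
abbrev Ground (c : ℕ) (p : Sym2 V → ℕ) (r : V → ℕ) :=
  Fin c ⊕ (Σ z : Sym2 V, Fin (p z)) ⊕ (Σ v : V, Fin (r v))

variable {c : ℕ} {p : Sym2 V → ℕ} {r : V → ℕ}

def isIn (v : V) : Ground c p r → Bool
  | .inl _ => true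
  | .inr (.inl x) => v ∈ x.1
  | .inr (.inr x) => x.1 = v

lemma card_filter_isIn (v : V) :
    #{x : Ground c p r | isIn v x} = c + ∑ z with v ∈ z, p z + r v := by
  rw [card_filter, Fintype.sum_sum_type, Fintype.sum_sum_type, Fintype.sum_sigma,
    Fintype.sum_sigma, sum_filter]
  simp [isIn, add_assoc]

lemma card_filter_isIn_and {u v : V} (huv : u ≠ v) :
    #{x : Ground c p r | isIn u x ∧ isIn v x} = c + p s(u, v) := by
  rw [card_filter, Fintype.sum_sum_type, Fintype.sum_sum_type, Fintype.sum_sigma,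
    Fintype.sum_sigma]
  simp [isIn, Sym2.mem_and_mem_iff huv, huv]

end IntersectionPattern

open IntersectionPattern in
theorem exists_finsets_card_inter {V : Type*} [Fintype V] [DecidableEq V] (c : ℕ)
    (p : Sym2 V → ℕ) (s : V → ℕ) (hs : ∀ v, c + ∑ z with v ∈ z, p z ≤ s v) :
    ∃ A : V → Finset ℕ, (∀ v, #(A v) = s v) ∧ ∀ u v, u ≠ v → #(A u ∩ A v) = c + p s(u, v) := by
  let r v := s v - (c + ∑ z with v ∈ z, p z)
  let ι : Ground c p r ↪ ℕ := (Fintype.equivFin _).toEmbedding.trans Fin.valEmbedding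
  refine ⟨fun v => ({x : Ground c p r | isIn v x} : Finset _).map ι, fun v => ?_,
    fun u v huv => ?_⟩
  · rw [card_map, card_filter_isIn]
    exact Nat.add_sub_of_le (hs v)
  · rw [← map_inter, ← filter_and, card_map, card_filter_isIn_and huv]

section Proportional

variable {V : Type*} {E : V → V → Prop} {α : ℝ}

lemma card_lt_card_of_proportional {A : V → Finset ℕ} (hα : 0 < α)
    (hA : ∀ u v : V, u ≠ v → (E u v ↔ ((A u ∩ A v).card : ℝ) > α * (A u).card))
    {u v : V} (huv : E u v) (hvu : ¬E v u) : #(A u) < #(A v) := by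
  have hne : u ≠ v := by
    rintro rfl
    exact hvu huv
  have h₁ := (hA u v hne).1 huv
  have h₂ := mt (hA v u hne.symm).2 hvu
  rw [inter_comm, not_lt] at h₂
  exact_mod_cast lt_of_mul_lt_mul_left (h₁.trans_le h₂) hα.le

lemma exists_proportional_of_rank [Fintype V] (hα0 : 0 < α) (hα1 : α < 1) (f : V → ℕ)
    (hf : ∀ u v, E u v → ¬E v u → f u < f v) :
    ∃ A : V → Finset ℕ, ∀ u v : V, u ≠ v →
      (E u v ↔ ((A u ∩ A v).card : ℝ) > α * (A u).card) := by
  classical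
  obtain ⟨K, hK⟩ : ∃ K : ℕ, 1 < α * K := by
    obtain ⟨K, hK⟩ := exists_nat_gt α⁻¹
    exact ⟨K, by rwa [inv_lt_iff_one_lt_mul₀' hα0] at hK⟩
  set N := univ.sup f
  set B := α * K * N + 2
  obtain ⟨M, hM⟩ : ∃ M : ℕ, α * M + Fintype.card (Sym2 V) * B ≤ M := by
    obtain ⟨M, hM⟩ := exists_nat_gt (Fintype.card (Sym2 V) * B / (1 - α))
    exact ⟨M, by rw [div_lt_iff₀ (by linarith)] at hM; linarith⟩
  let s v := M + K * f v
  set c := ⌊α * M⌋₊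
  have hc : (c : ℝ) ≤ α * M := Nat.floor_le (by positivity)
  have hc' : α * M < c + 1 := Nat.lt_floor_add_one _
  obtain ⟨p, hpB, hp⟩ := exists_sym2_lt_iff_of_gap E (fun v => α * s v) c (α * (M + K * N))
    (fun v => by simp only [s]; push_cast; nlinarith [(f v).cast_nonneg (α := ℝ)])
    (fun v => by simp only [s]; push_cast; gcongr; exact_mod_cast le_sup (mem_univ v))
    (fun u v huv hvu => by
      have : (f u : ℝ) + 1 ≤ f v := by exact_mod_cast hf u v huv hvu
      simp only [s]; push_cast; nlinarith)
  have hp_le (z : Sym2 V) : (p z : ℝ) ≤ B := by linarith [hpB z]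
  obtain ⟨A, hAcard, hAinter⟩ := exists_finsets_card_inter c p s fun v => by
    have hsum : ∑ z with v ∈ z, (p z : ℝ) ≤ Fintype.card (Sym2 V) * B :=
      (sum_le_card_nsmul _ _ _ fun z _ => hp_le z).trans
        (by rw [nsmul_eq_mul]; gcongr; exact card_le_univ _)
    have : (c : ℝ) + ∑ z with v ∈ z, (p z : ℝ) ≤ s v := by
      simp only [s]; push_cast; nlinarith [(f v).cast_nonneg (α := ℝ)]
    exact_mod_cast this
  refine ⟨A, fun u v huv => ?_⟩
  rw [hAinter u v huv, hAcard, hp]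
  push_cast
  exact Iff.rfl

end Proportional

theorem stmt_11_general {V : Type*} [Fintype V] (E : V → V → Prop)
    (α : ℝ) (hα0 : 0 < α) (hα1 : α < 1) :
    (∃ A : V → Finset ℕ, ∀ u v : V, u ≠ v →
        (E u v ↔ ((A u ∩ A v).card : ℝ) > α * (A u).card)) ↔
      ¬ HasOneWayCycle E :=
  ⟨fun ⟨A, hA⟩ => not_hasOneWayCycle_of_lt (fun v => #(A v)) fun _ _ =>
      card_lt_card_of_proportional hα0 hA,
    fun h =>
      let ⟨f, hf⟩ := exists_rank_of_not_transGen_self (not_transGen_self_of_not_hasOneWayCycle h)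
      exists_proportional_of_rank hα0 hα1 f fun u v huv hvu => hf u v ⟨huv, hvu⟩⟩

/-- For any real α ∈ (0,1), a finite digraph is a proportionality α-digraph iff it has
no one-way cycle. -/
theorem stmt_11 {V : Type*} [Fintype V] (E : V → V → Prop)
    (hirr : Irreflexive E) (α : ℝ) (hα0 : 0 < α) (hα1 : α < 1) :
    (∃ A : V → Finset ℕ, ∀ u v : V, u ≠ v →
        (E u v ↔ ((A u ∩ A v).card : ℝ) > α * (A u).card)) ↔
      ¬ HasOneWayCycle E :=
  stmt_11_general E α hα0 hα1
end

section
/- For any two reals α, β ∈ (0,1), a finite digraph G is a proportionality α-digraph if and only if it is a proportionality β-digraph. -/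
/-!
Only the numbers `#(A u)` and `#(A u ∩ A v)` matter. For a natural number `c`, the test
`α * #(A u) < c` is a threshold test `n_u < c` with `n_u = ⌊α * #(A u)⌋₊`. Enlarging every set
by a common block of `s` new elements and `A u` by `p u` private new elements turns the
`β`-test into `β * (#(A u) + s + p u) - s < c`. For `s` large the threshold
`β * (#(A u) + s) - s` starts below `0`, and since it moves in steps of `β < 1` as `p u` grows,
some `p u` puts it in `[n_u, n_u + 1)`, where it makes the same decisions as the `α`-test.
-/

open Finset

section

variable {V : Type*}

def IsProportionalityDigraph (E : V → V → Prop) (α : ℝ) : Prop :=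
  ∃ A : V → Finset ℕ, ∀ u v, u ≠ v → (E u v ↔ α * #(A u) < #(A u ∩ A v))

lemma exists_nat_add_mul_lt_iff {x β : ℝ} (hβ0 : 0 < β) (hβ1 : β ≤ 1) {n : ℕ} (hx : x ≤ n) :
    ∃ p : ℕ, ∀ c : ℕ, x + β * p < c ↔ n < c := by
  refine ⟨⌈(n - x) / β⌉₊, fun c => ?_⟩
  have hlow : n - x ≤ β * ⌈(n - x) / β⌉₊ := (div_le_iff₀' hβ0).1 (Nat.le_ceil _)
  have hhigh : β * (⌈(n - x) / β⌉₊ - 1) < n - x := by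
    rw [← lt_div_iff₀' hβ0, sub_lt_iff_lt_add]
    exact Nat.ceil_lt_add_one (div_nonneg (sub_nonneg.2 hx) hβ0.le)
  constructor
  · intro h
    exact_mod_cast (show (n : ℝ) < c by linarith)
  · intro h
    have : (n : ℝ) + 1 ≤ c := by exact_mod_cast h
    linarith [mul_sub β (⌈(n - x) / β⌉₊ : ℝ) 1]

lemma Finset.disjSum_inter_disjSum {α β : Type*} [DecidableEq α] [DecidableEq β]
    (s s' : Finset α) (t t' : Finset β) :
    s.disjSum t ∩ s'.disjSum t' = (s ∩ s').disjSum (t ∩ t') := by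
  ext (x | x) <;> simp

lemma exists_finset_nat_padding [Countable V] (A : V → Finset ℕ) (s : ℕ) (p : V → ℕ) :
    ∃ B : V → Finset ℕ, (∀ u, #(B u) = #(A u) + s + p u) ∧
      ∀ u v, u ≠ v → #(B u ∩ B v) = #(A u ∩ A v) + s := by
  classical
  obtain ⟨f, hf⟩ := exists_injective_nat (ℕ ⊕ ℕ ⊕ V × ℕ)
  let C : V → Finset (ℕ ⊕ ℕ ⊕ V × ℕ) := fun u =>
    (A u).disjSum ((range s).disjSum ({u} ×ˢ range (p u)))
  refine ⟨fun u => (C u).map ⟨f, hf⟩, fun u => ?_, fun u v huv => ?_⟩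
  · simp [C, add_assoc]
  · rw [← map_inter, card_map]
    simp [C, disjSum_inter_disjSum, product_inter_product, huv, -singleton_product]

lemma exists_finset_nat_proportional_iff [Finite V] {α β : ℝ} (hα : 0 ≤ α) (hβ0 : 0 < β)
    (hβ1 : β < 1) (A : V → Finset ℕ) :
    ∃ B : V → Finset ℕ, ∀ u v, u ≠ v →
      (β * #(B u) < #(B u ∩ B v) ↔ α * #(A u) < #(A u ∩ A v)) := by
  obtain ⟨S, hS⟩ := Finite.exists_le fun u => β * #(A u) / (1 - β)
  obtain ⟨s, hs⟩ := exists_nat_ge S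
  have hstart : ∀ u, β * (#(A u) + s) - s ≤ ⌊α * #(A u)⌋₊ := by
    intro u
    have h := (hS u).trans hs
    rw [div_le_iff₀ (sub_pos.2 hβ1)] at h
    have : (0 : ℝ) ≤ ⌊α * #(A u)⌋₊ := Nat.cast_nonneg _
    linarith
  choose p hp using fun u => exists_nat_add_mul_lt_iff hβ0 hβ1.le (hstart u)
  obtain ⟨B, hcard, hinter⟩ := exists_finset_nat_padding A s p
  refine ⟨B, fun u v huv => ?_⟩
  rw [hcard, hinter u v huv, ← Nat.floor_lt (a := α * #(A u)) (by positivity), ← hp u]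
  push_cast
  constructor <;> intro h <;> linarith

lemma IsProportionalityDigraph.of_pos [Finite V] {E : V → V → Prop} {α β : ℝ}
    (h : IsProportionalityDigraph E α) (hα : 0 ≤ α) (hβ0 : 0 < β) (hβ1 : β < 1) :
    IsProportionalityDigraph E β := by
  obtain ⟨A, hA⟩ := h
  obtain ⟨B, hB⟩ := exists_finset_nat_proportional_iff hα hβ0 hβ1 A
  exact ⟨B, fun u v huv => (hA u v huv).trans (hB u v huv).symm⟩

end

theorem stmt_12_general {V : Type*} [Fintype V] (E : V → V → Prop)
    (α β : ℝ) (hα0 : 0 < α) (hα1 : α < 1) (hβ0 : 0 < β) (hβ1 : β < 1) :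
    (∃ A : V → Finset ℕ, ∀ u v : V, u ≠ v →
        (E u v ↔ ((A u ∩ A v).card : ℝ) > α * (A u).card)) ↔
    (∃ A : V → Finset ℕ, ∀ u v : V, u ≠ v →
        (E u v ↔ ((A u ∩ A v).card : ℝ) > β * (A u).card)) :=
  ⟨fun h => IsProportionalityDigraph.of_pos h hα0.le hβ0 hβ1,
    fun h => IsProportionalityDigraph.of_pos h hβ0.le hα0 hα1⟩

/-- For any α, β ∈ (0,1), a finite digraph is a proportionality α-digraph iff it is a
proportionality β-digraph. -/
theorem stmt_12 {V : Type*} [Fintype V] (E : V → V → Prop)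
    (hirr : Irreflexive E)
    (α β : ℝ) (hα0 : 0 < α) (hα1 : α < 1) (hβ0 : 0 < β) (hβ1 : β < 1) :
    (∃ A : V → Finset ℕ, ∀ u v : V, u ≠ v →
        (E u v ↔ ((A u ∩ A v).card : ℝ) > α * (A u).card)) ↔
    (∃ A : V → Finset ℕ, ∀ u v : V, u ≠ v →
        (E u v ↔ ((A u ∩ A v).card : ℝ) > β * (A u).card)) :=
  stmt_12_general E α β hα0 hα1 hβ0 hβ1
end
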